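/- Let Θ̃ ∈ ℝ^{n×p}, φ ∈ ℝ^p, and let P, P' ∈ ℝ^{p×p} be symmetric positive definite with P'⁻¹ = λ P⁻¹ + φφᵀ, λ ∈ (0,1]. Define Θ̃' = λ Θ̃ P⁻¹ P'. Then tr(Θ̃' P'⁻¹ Θ̃'ᵀ) ≤ λ · tr(Θ̃ P⁻¹ Θ̃ᵀ). -/

import Mathlib

open Matrix

private lemma mul_vmv {n p : ℕ} (Θ : Matrix (Fin n) (Fin p) ℝ) (u v : Fin p → ℝ) :
    Θ * vecMulVec u v = vecMulVec (Θ *ᵥ u) v := by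
  ext i j
  simp only [mul_apply, vecMulVec_apply, mulVec, dotProduct, Finset.sum_mul]
  exact Finset.sum_congr rfl fun k _ => by ring

private lemma vmv_mul {n p : ℕ} (Θ : Matrix (Fin n) (Fin p) ℝ) (u : Fin n → ℝ) (v : Fin p → ℝ) :
    vecMulVec u v * Θᵀ = vecMulVec u (Θ *ᵥ v) := by
  ext i j
  simp only [mul_apply, vecMulVec_apply, transpose_apply, mulVec, dotProduct, Finset.mul_sum]
  exact Finset.sum_congr rfl fun k _ => by ring

private lemma vmv_mul_vmv {p : ℕ} (u v a b : Fin p → ℝ) (M : Matrix (Fin p) (Fin p) ℝ) :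
    vecMulVec u v * M * vecMulVec a b = (v ⬝ᵥ (M *ᵥ a)) • vecMulVec u b := by
  ext i j
  simp only [mul_apply, vecMulVec_apply, Matrix.smul_apply, dotProduct, mulVec, smul_eq_mul,
    Finset.sum_mul, Finset.mul_sum]
  rw [Finset.sum_comm]
  refine Finset.sum_congr rfl fun k _ => Finset.sum_congr rfl fun l _ => by ring

private lemma conj_vmv {n p : ℕ} (Θ : Matrix (Fin n) (Fin p) ℝ) (u v : Fin p → ℝ) :
    Θ * vecMulVec u v * Θᵀ = vecMulVec (Θ *ᵥ u) (Θ *ᵥ v) := by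
  rw [mul_vmv, vmv_mul]

private lemma trace_vmv {p : ℕ} (u v : Fin p → ℝ) :
    (vecMulVec u v).trace = u ⬝ᵥ v := by
  simp [trace, vecMulVec_apply, dotProduct, diag]

private lemma vmv_mulVec {p : ℕ} (u v w : Fin p → ℝ) :
    vecMulVec u v *ᵥ w = (v ⬝ᵥ w) • u := by
  ext i
  simp only [mulVec, vecMulVec_apply, dotProduct, Pi.smul_apply, smul_eq_mul, Finset.sum_mul]
  exact Finset.sum_congr rfl fun k _ => by ring

/-- One-step Lyapunov decrease for matrix RLS:
if `P'⁻¹ = λ P⁻¹ + φ φᵀ` with `P, P'` symmetric positive definite, `λ ∈ (0,1]`,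
and `Θ̃' = λ Θ̃ P⁻¹ P'`, then `tr(Θ̃' P'⁻¹ Θ̃'ᵀ) ≤ λ tr(Θ̃ P⁻¹ Θ̃ᵀ)`. -/
theorem rls_lyapunov_decrease {n p : ℕ} (Θt : Matrix (Fin n) (Fin p) ℝ)
    (φ : Fin p → ℝ) (P P' : Matrix (Fin p) (Fin p) ℝ)
    (hP : P.PosDef) (hP' : P'.PosDef) (lam : ℝ) (hlam : 0 < lam) (hlam1 : lam ≤ 1)
    (hrec : P'⁻¹ = lam • P⁻¹ + vecMulVec φ φ)
    (Θt' : Matrix (Fin n) (Fin p) ℝ) (hΘ' : Θt' = lam • (Θt * P⁻¹ * P')) :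
    (Θt' * P'⁻¹ * Θt'ᵀ).trace ≤ lam * (Θt * P⁻¹ * Θtᵀ).trace := by
  set A := P⁻¹ with hA
  set C := P'⁻¹ with hC
  set F := vecMulVec φ φ with hF
  set s : ℝ := φ ⬝ᵥ (P' *ᵥ φ) with hs
  have hdet : IsUnit P'.det := isUnit_iff_ne_zero.mpr hP'.det_pos.ne'
  have hP'C : P' * C = 1 := Matrix.mul_nonsing_inv _ hdet
  have hCP' : C * P' = 1 := Matrix.nonsing_inv_mul _ hdet
  have hAt : Aᵀ = A := by
    rw [hA, Matrix.transpose_nonsing_inv]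
    congr 1
    rw [← conjTranspose_eq_transpose_of_trivial]
    exact hP.isHermitian.eq
  have hP't : P'ᵀ = P' := by
    rw [← conjTranspose_eq_transpose_of_trivial]
    exact hP'.isHermitian.eq
  have hFPF : F * P' * F = s • F := by
    rw [hF, vmv_mul_vmv, ← hs]
  have hlamA : lam • A = C - F := by
    rw [hrec]; abel
  -- key identity
  have key : (lam * lam) • (A * P' * A) = lam • A - (1 - s) • F := by
    have expand : (lam * lam) • (A * P' * A) = (C - F) * P' * (C - F) := by
      rw [← hlamA, Matrix.smul_mul, Matrix.smul_mul, Matrix.mul_smul, smul_smul]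
    rw [expand]
    have e2 : (C - F) * P' * (C - F) = C - F - (F - s • F) := by
      simp only [Matrix.sub_mul, Matrix.mul_sub, Matrix.mul_assoc, hP'C, Matrix.mul_one]
      rw [← Matrix.mul_assoc C P' F, hCP', Matrix.one_mul, ← Matrix.mul_assoc F P' F, hFPF]
    rw [e2, hlamA, sub_smul, one_smul]
  -- rewrite LHS
  have hΘt : Θt'ᵀ = lam • (P' * (A * Θtᵀ)) := by
    rw [hΘ', Matrix.transpose_smul, Matrix.transpose_mul, Matrix.transpose_mul, hAt, hP't]
  have hLHS : Θt' * C * Θt'ᵀ = Θt * ((lam * lam) • (A * P' * A)) * Θtᵀ := by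
    rw [hΘt, hΘ']
    simp only [Matrix.smul_mul, Matrix.mul_smul, smul_smul]
    congr 1
    rw [Matrix.mul_assoc (Θt * A * P') C, ← Matrix.mul_assoc C P', hCP', Matrix.one_mul]
    simp only [Matrix.mul_assoc]
  -- nonnegativity of the quadratic trace term
  have hQ : (0:ℝ) ≤ (Θt *ᵥ φ) ⬝ᵥ (Θt *ᵥ φ) :=
    Finset.sum_nonneg fun i _ => mul_self_nonneg _
  -- s ∈ [0, 1]
  have hs0 : 0 ≤ s := by simpa using hP'.posSemidef.dotProduct_mulVec_nonneg φ
  have hCw : C *ᵥ (P' *ᵥ φ) = φ := by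
    rw [mulVec_mulVec, hCP', one_mulVec]
  have hd : (P' *ᵥ φ) ⬝ᵥ φ = s := dotProduct_comm _ _
  have h1 : (P' *ᵥ φ) ⬝ᵥ (C *ᵥ (P' *ᵥ φ)) = s := by rw [hCw, hd]
  rw [hrec] at h1
  rw [add_mulVec, smul_mulVec, dotProduct_add, dotProduct_smul, hF, vmv_mulVec,
    dotProduct_smul, hd] at h1
  simp only [smul_eq_mul, ← hs] at h1
  have hApsd : (0:ℝ) ≤ (P' *ᵥ φ) ⬝ᵥ (A *ᵥ (P' *ᵥ φ)) := by
    simpa using (hP.inv).posSemidef.dotProduct_mulVec_nonneg (P' *ᵥ φ)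
  have hs1 : s ≤ 1 := by nlinarith
  -- conclude
  have htr : (Θt' * C * Θt'ᵀ).trace
      = lam * (Θt * A * Θtᵀ).trace - (1 - s) * ((Θt *ᵥ φ) ⬝ᵥ (Θt *ᵥ φ)) := by
    rw [hLHS, key, Matrix.mul_sub, Matrix.sub_mul, trace_sub,
      Matrix.mul_smul, Matrix.smul_mul, trace_smul,
      Matrix.mul_smul, Matrix.smul_mul, trace_smul, hF,
      conj_vmv, trace_vmv]
    simp [smul_eq_mul, Matrix.mul_assoc]
  rw [htr]
  nlinarith [mul_nonneg (sub_nonneg.mpr hs1) hQ]
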